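/- arXiv:2501.06415 — 7 statements merged into one kernel-verified Lean document; each statement's English description precedes it below -/
import Mathlib

section
/- Let ℓ ≥ 2 and n ≥ 3 be integers and set a = ℓ + n - 1. If for some integer r with 1 ≤ r ≤ n-2 the set {0, 1, ..., ℓ} ∪ {ℓ + r, ℓ + 2r, ..., ℓ + (n-2)r} is a complete system of representatives modulo a, then r = 1. -/
/-!
Write `m = n - 2`, so `a = ℓ + m + 1` and the residues `1, …, m` are exactly those not covered by
`0, …, ℓ`. Comparing `ℓ + i r` with the representatives in `[0, ℓ]` shows that multiplication by
`r` maps the residues `1, …, m` onto themselves. In particular `r` has an inverse `j` among them;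
if `j ≥ 2`, then `(j - 1) r ≡ 1 - r` lies in `[1, m]`, which forces `a - r ∈ [1, m]`, and then
`i r ≡ -r` for some `i ∈ [1, m]` gives `i + 1 ≡ 0`, impossible as `2 ≤ i + 1 ≤ m + 1 < a`.
-/

open Set

def IsCompleteResidueSystem (S : Set ℤ) (a : ℤ) : Prop :=
  ∀ z : ℤ, ∃! s, s ∈ S ∧ s ≡ z [ZMOD a]

namespace IsCompleteResidueSystem

variable {S : Set ℤ} {a : ℤ}

theorem exists_mem_modEq (h : IsCompleteResidueSystem S a) (z : ℤ) : ∃ s ∈ S, s ≡ z [ZMOD a] :=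
  (h z).exists

theorem eq_of_modEq (h : IsCompleteResidueSystem S a) {s s' : ℤ} (hs : s ∈ S) (hs' : s' ∈ S)
    (hss' : s ≡ s' [ZMOD a]) : s = s' :=
  (h s').unique ⟨hs, hss'⟩ ⟨hs', Int.ModEq.refl s'⟩

end IsCompleteResidueSystem

theorem Int.ModEq.eq_of_abs_sub_lt {a x y : ℤ} (h : x ≡ y [ZMOD a]) (hxy : |y - x| < a) :
    x = y := by
  have := Int.eq_zero_of_abs_lt_dvd h.dvd hxy
  omega

theorem eq_one_of_mul_mapsTo_Icc_of_mul_surjOn_Icc {a m r : ℤ} (hma : m + 1 < a)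
    (hr : r ∈ Icc 1 m)
    (hmaps : ∀ i ∈ Icc 1 m, ∃ t ∈ Icc 1 m, i * r ≡ t [ZMOD a])
    (hsurj : ∀ t ∈ Icc 1 m, ∃ i ∈ Icc 1 m, i * r ≡ t [ZMOD a]) :
    r = 1 := by
  obtain ⟨hr1, hrm⟩ := hr
  obtain ⟨j, ⟨hj1, hjm⟩, hj⟩ := hsurj 1 ⟨le_rfl, by omega⟩
  rcases eq_or_lt_of_le hj1 with rfl | hj2
  · rw [one_mul] at hj
    exact hj.eq_of_abs_sub_lt (abs_sub_lt_iff.mpr ⟨by omega, by omega⟩)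
  exfalso
  obtain ⟨t, ⟨ht1, htm⟩, ht⟩ := hmaps (j - 1) ⟨by omega, by omega⟩
  have hrt : r + t - 1 ≡ 0 [ZMOD a] :=
    calc r + t - 1 ≡ r + (j - 1) * r - 1 [ZMOD a] := (ht.symm.add_left r).sub_right 1
      _ = j * r - 1 := by ring
      _ ≡ 1 - 1 [ZMOD a] := hj.sub_right 1
      _ = 0 := sub_self 1
  have har : a ≤ r + t - 1 := Int.le_of_dvd (by omega) (Int.modEq_zero_iff_dvd.mp hrt)
  obtain ⟨i, ⟨hi1, him⟩, hi⟩ := hsurj (a - r) ⟨by omega, by omega⟩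
  have hi0 : i + 1 ≡ 0 [ZMOD a] :=
    calc i + 1 = (i + 1) * 1 := (mul_one _).symm
      _ ≡ (i + 1) * (j * r) [ZMOD a] := (hj.mul_left _).symm
      _ = (i * r + r) * j := by ring
      _ ≡ (a - r + r) * j [ZMOD a] := (hi.add_right r).mul_right j
      _ = a * j := by ring
      _ ≡ 0 [ZMOD a] := Int.modEq_zero_iff_dvd.mpr (dvd_mul_right a j)
  have := hi0.eq_of_abs_sub_lt (abs_sub_lt_iff.mpr ⟨by omega, by omega⟩)
  omega

section ProgressionAboveInterval

variable {ℓ m r : ℤ}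
  (h : IsCompleteResidueSystem (Icc 0 ℓ ∪ {x | ∃ i, 1 ≤ i ∧ i ≤ m ∧ x = ℓ + i * r}) (ℓ + m + 1))
include h

theorem exists_mem_Icc_mul_modEq_of_completeResidueSystem {t : ℤ} (ht : t ∈ Icc 1 m) :
    ∃ i ∈ Icc 1 m, i * r ≡ t [ZMOD ℓ + m + 1] := by
  obtain ⟨ht1, htm⟩ := ht
  obtain ⟨s, hs, hst⟩ := h.exists_mem_modEq (ℓ + t)
  rcases hs with ⟨hs0, hsℓ⟩ | ⟨i, hi1, him, rfl⟩
  · have := hst.eq_of_abs_sub_lt (abs_sub_lt_iff.mpr ⟨by omega, by omega⟩)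
    omega
  · exact ⟨i, ⟨hi1, him⟩, Int.ModEq.add_left_cancel' ℓ hst⟩

theorem mul_modEq_mem_Icc_of_completeResidueSystem (hℓ : 0 ≤ ℓ) (hr : 1 ≤ r) {i : ℤ}
    (hi : i ∈ Icc 1 m) : ∃ t ∈ Icc 1 m, i * r ≡ t [ZMOD ℓ + m + 1] := by
  obtain ⟨hi1, him⟩ := hi
  have hir : 0 < i * r := mul_pos (by omega) (by omega)
  have ha : 0 < ℓ + m + 1 := by omega
  set s := (ℓ + i * r) % (ℓ + m + 1)
  have hs0 : 0 ≤ s := Int.emod_nonneg _ ha.ne'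
  have hsa : s < ℓ + m + 1 := Int.emod_lt_of_pos _ ha
  have hsmod : ℓ + i * r ≡ s [ZMOD ℓ + m + 1] := (Int.mod_modEq _ _).symm
  by_cases hsℓ : s ≤ ℓ
  · have := h.eq_of_modEq (Or.inr ⟨i, hi1, him, rfl⟩) (Or.inl ⟨hs0, hsℓ⟩) hsmod
    omega
  · refine ⟨s - ℓ, ⟨by omega, by omega⟩, Int.ModEq.add_left_cancel' ℓ ?_⟩
    rwa [add_sub_cancel]

end ProgressionAboveInterval

theorem stmt0_general (ℓ n r : ℤ) (hℓ : 2 ≤ ℓ) (a : ℤ) (ha : a = ℓ + n - 1)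
    (hr1 : 1 ≤ r) (hr2 : r ≤ n - 2)
    (hcomp : ∀ z : ℤ, ∃! s, s ∈ (Set.Icc (0 : ℤ) ℓ ∪
        {x : ℤ | ∃ i : ℤ, 1 ≤ i ∧ i ≤ n - 2 ∧ x = ℓ + i * r}) ∧ s ≡ z [ZMOD a]) :
    r = 1 := by
  have h : IsCompleteResidueSystem (Icc 0 ℓ ∪ {x | ∃ i, 1 ≤ i ∧ i ≤ n - 2 ∧ x = ℓ + i * r})
      (ℓ + (n - 2) + 1) := by
    rwa [show ℓ + (n - 2) + 1 = a by omega]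
  exact eq_one_of_mul_mapsTo_Icc_of_mul_surjOn_Icc (by omega) ⟨hr1, hr2⟩
    (fun _ hi ↦ mul_modEq_mem_Icc_of_completeResidueSystem h (by omega) hr1 hi)
    (fun _ ht ↦ exists_mem_Icc_mul_modEq_of_completeResidueSystem h ht)

theorem stmt0 (ℓ n r : ℤ) (hℓ : 2 ≤ ℓ) (hn : 3 ≤ n) (a : ℤ) (ha : a = ℓ + n - 1)
    (hr1 : 1 ≤ r) (hr2 : r ≤ n - 2)
    (hcomp : ∀ z : ℤ, ∃! s, s ∈ (Set.Icc (0 : ℤ) ℓ ∪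
        {x : ℤ | ∃ i : ℤ, 1 ≤ i ∧ i ≤ n - 2 ∧ x = ℓ + i * r}) ∧ s ≡ z [ZMOD a]) :
    r = 1 :=
  stmt0_general ℓ n r hℓ a ha hr1 hr2 hcomp
end

section
/- Let H be a numerical semigroup with at least 3 minimal generators. If there exist integers h ≥ 0 and α > 0 such that PF(H) = {h + α, h + 2α, ..., h + (n-1)α} where n ≥ 3 is the number of minimal generators, then h ∈ H and α ∉ H. -/
/-- A numerical semigroup, viewed as a set of integers: it contains 0, is closed under
addition, consists of nonnegative integers, and has finite complement in ℕ. -/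
def IsNumericalSemigroup (H : Set ℤ) : Prop :=
  0 ∈ H ∧ (∀ x ∈ H, ∀ y ∈ H, x + y ∈ H) ∧ (∀ x ∈ H, 0 ≤ x) ∧
    {z : ℤ | 0 ≤ z ∧ z ∉ H}.Finite

/-- The set of pseudo-Frobenius numbers of `H`. -/
def PF (H : Set ℤ) : Set ℤ :=
  {f : ℤ | f ∉ H ∧ ∀ s ∈ H, s ≠ 0 → f + s ∈ H}

/-- The Apéry set of `H` with respect to `h`. -/
def Ap (H : Set ℤ) (h : ℤ) : Set ℤ := {x ∈ H | x - h ∉ H}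

/-- The set of minimal generators of `H`: nonzero elements that are not a sum of two
nonzero elements of `H`. -/
def MinGens (H : Set ℤ) : Set ℤ :=
  {x ∈ H | x ≠ 0 ∧ ¬ ∃ y ∈ H, ∃ z ∈ H, y ≠ 0 ∧ z ≠ 0 ∧ y + z = x}

/-!
Among the integers `y ∉ H` with `y - x ∈ H`, the largest one is a pseudo-Frobenius number.
Applied to `x = α` (a gap, since otherwise `h + α ∈ PF H` would force `h + 2α ∈ H`), this gives
some `h + iα ∈ PF H` with `h + (i - 1)α ∈ H`; as `h + (i - 1)α ∉ H` whenever `i ≥ 2`, we get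
`i = 1`, i.e. `h ∈ H`.
-/

namespace IsNumericalSemigroup

variable {H : Set ℤ}

lemma finite_setOf_notMem_sub_mem (hH : IsNumericalSemigroup H) (x : ℤ) :
    {y | y ∉ H ∧ y - x ∈ H}.Finite := by
  refine ((Set.finite_Icc x 0).union hH.2.2.2).subset fun y ⟨hyH, hyx⟩ => ?_
  have hxy : x ≤ y := by linarith [hH.2.2.1 _ hyx]
  rcases le_or_gt y 0 with hy | hy
  · exact Or.inl ⟨hxy, hy⟩
  · exact Or.inr ⟨hy.le, hyH⟩

lemma exists_mem_PF_sub_mem (hH : IsNumericalSemigroup H) {x : ℤ} (hx : x ∉ H) :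
    ∃ f ∈ PF H, f - x ∈ H := by
  obtain ⟨f, ⟨hfH, hfx⟩, hmax⟩ := Set.exists_max_image _ id (hH.finite_setOf_notMem_sub_mem x)
    ⟨x, hx, by simpa using hH.1⟩
  refine ⟨f, ⟨hfH, fun s hs hs0 => ?_⟩, hfx⟩
  by_contra hfs
  have hs_pos : 0 < s := lt_of_le_of_ne (hH.2.2.1 s hs) (Ne.symm hs0)
  have hfsx : f + s - x ∈ H := by
    rw [add_sub_right_comm]
    exact hH.2.1 _ hfx _ hs
  have := hmax (f + s) ⟨hfs, hfsx⟩
  simp only [id] at this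
  linarith

end IsNumericalSemigroup

theorem stmt1_general (H : Set ℤ) (hH : IsNumericalSemigroup H) (n : ℕ) (hn : 3 ≤ n)
    (h α : ℤ) (hα : 0 < α)
    (hPF : PF H = {x | ∃ i : ℕ, 1 ≤ i ∧ i ≤ n - 1 ∧ x = h + (i : ℤ) * α}) :
    h ∈ H ∧ α ∉ H := by
  have mem_PF : ∀ i : ℕ, 1 ≤ i → i ≤ n - 1 → h + (i : ℤ) * α ∈ PF H :=
    fun i hi1 hin => hPF ▸ ⟨i, hi1, hin, rfl⟩
  have hαH : α ∉ H := by
    intro hαH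
    apply (mem_PF 2 (by omega) (by omega)).1
    convert (mem_PF 1 le_rfl (by omega)).2 α hαH hα.ne' using 1
    push_cast
    ring
  refine ⟨?_, hαH⟩
  obtain ⟨f, hf, hfα⟩ := hH.exists_mem_PF_sub_mem hαH
  rw [hPF] at hf
  obtain ⟨i, hi1, hin, rfl⟩ := hf
  obtain rfl | hi := eq_or_lt_of_le hi1
  · simpa using hfα
  · refine absurd hfα ?_
    convert (mem_PF (i - 1) (by omega) (by omega)).1 using 2
    push_cast [Nat.cast_sub hi1]
    ring

theorem stmt1 (H : Set ℤ) (hH : IsNumericalSemigroup H) (n : ℕ) (hn : 3 ≤ n)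
    (hedim : (MinGens H).ncard = n) (h α : ℤ) (hh : 0 ≤ h) (hα : 0 < α)
    (hPF : PF H = {x | ∃ i : ℕ, 1 ≤ i ∧ i ≤ n - 1 ∧ x = h + (i : ℤ) * α}) :
    h ∈ H ∧ α ∉ H :=
  stmt1_general H hH n hn h α hα hPF
end

section
/- Let H = ⟨a₁,...,aₙ⟩ be a numerical semigroup with embedding dimension n ≥ 3 and multiplicity a₁, and set ℓ = a₁ - n + 1 with ℓ = 2. Suppose k[H]/(t^{a₁}) is stretched and PF(H) = {h + α, h + 2α, ..., h + (n-1)α} for some h ≥ 0, α > 0. Then Ap(H, a₁) = {0, a₂, ..., aₙ} ∪ {2a_λ} for some 2 ≤ λ ≤ n; i.e., the extra element of the Apéry set is twice a minimal generator. -/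
open Polynomial

/-- An Artinian local ring is stretched if the square of its maximal ideal is zero or
principal. For a commutative ring we ask this for every maximal ideal. -/
def Stretched (A : Type*) [CommRing A] : Prop :=
  ∀ I : Ideal A, I.IsMaximal → (I ^ 2 : Ideal A).IsPrincipal

/-- The numerical semigroup ring k[H] ⊆ k[t], for H generated by the aᵢ. -/
noncomputable def NSRing (k : Type*) [Field k] {n : ℕ} (a : Fin n → ℕ) :
    Subalgebra k (Polynomial k) :=
  Algebra.adjoin k (Set.range fun i => (X : Polynomial k) ^ a i)

/-- The element t^{a₀} of k[H]. -/
noncomputable def tMult (k : Type*) [Field k] {n : ℕ} [NeZero n] (a : Fin n → ℕ) :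
    NSRing k a :=
  ⟨(X : Polynomial k) ^ a 0, Algebra.subset_adjoin ⟨0, rfl⟩⟩


lemma exists_eq_union_singleton_of_ncard_eq_succ {α : Type*} {s t : Set α} (hst : s ⊆ t)
    (ht : t.Finite) (hcard : t.ncard = s.ncard + 1) : ∃ w ∉ s, t = s ∪ {w} := by
  have hdiff : (t \ s).ncard = 1 := by rw [Set.ncard_sdiff hst (ht.subset hst)]; omega
  obtain ⟨w, hw⟩ := Set.ncard_eq_one.mp hdiff
  have hwts : w ∈ t \ s := hw ▸ rfl
  exact ⟨w, hwts.2, by rw [← hw, Set.union_sdiff_cancel hst]⟩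

lemma ncard_setOf_add_mul (h : ℤ) {α : ℤ} (hα : α ≠ 0) (N : ℕ) :
    {x : ℤ | ∃ i : ℕ, 1 ≤ i ∧ i ≤ N ∧ x = h + i * α}.ncard = N := by
  have hinj : Function.Injective fun i : ℕ => h + i * α := fun i j hij => by
    exact_mod_cast mul_right_cancel₀ hα (add_left_cancel hij)
  have hset : {x : ℤ | ∃ i : ℕ, 1 ≤ i ∧ i ≤ N ∧ x = h + i * α} =
      (fun i : ℕ => h + i * α) '' (Finset.Icc 1 N : Set ℕ) := by
    ext x
    simp [eq_comm, and_assoc]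
  rw [hset, Set.ncard_image_of_injective _ hinj, Set.ncard_coe_finset, Nat.card_Icc,
    Nat.add_sub_cancel]

lemma ncard_insert_zero_setOf_ne_zero {n : ℕ} [NeZero n] {a : Fin n → ℕ}
    (hinj : Function.Injective a) (ha : ∀ i, a i ≠ 0) :
    (insert (0 : ℤ) {x : ℤ | ∃ i : Fin n, i ≠ 0 ∧ x = (a i : ℤ)}).ncard = n := by
  have hset : {x : ℤ | ∃ i : Fin n, i ≠ 0 ∧ x = (a i : ℤ)} = (fun i => (a i : ℤ)) '' {0}ᶜ := by
    ext; simp [eq_comm]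
  rw [hset, Set.ncard_insert_of_notMem (by rintro ⟨i, -, hi⟩; exact ha i (by simpa using hi))
    ((Set.toFinite _).image _), Set.ncard_image_of_injective _ (f := fun i => (a i : ℤ))
    (Nat.cast_injective.comp hinj), Set.ncard_compl, Nat.card_fin, Set.ncard_singleton]
  have := NeZero.pos n
  omega

lemma nonneg_of_mem_closure {s : Set ℤ} (hs : ∀ x ∈ s, 0 ≤ x) {x : ℤ}
    (hx : x ∈ AddSubmonoid.closure s) : 0 ≤ x := by
  induction hx using AddSubmonoid.closure_induction with
  | mem y hy => exact hs y hy
  | zero => exact le_rfl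
  | add y z _ _ hy hz => exact add_nonneg hy hz

section Apery

variable {S : AddSubmonoid ℤ} {m x y z f : ℤ}

lemma zero_mem_Ap (hx : x ∈ Ap S m) : (0 : ℤ) ∈ Ap S m := by
  refine ⟨S.zero_mem, fun h => hx.2 ?_⟩
  simpa [sub_eq_add_neg] using S.add_mem hx.1 (by simpa using h)

lemma mem_Ap_of_add_mem_Ap (hz : z ∈ S) (hy : y ∈ S) (hyz : y + z ∈ Ap S m) : y ∈ Ap S m :=
  ⟨hy, fun h => hyz.2 (by simpa [sub_add_eq_add_sub] using S.add_mem h hz)⟩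

lemma mem_Ap_of_mem_MinGens (hx : x ∈ MinGens S) (hm : m ∈ S) (hm0 : m ≠ 0) (hxm : x ≠ m) :
    x ∈ Ap S m :=
  ⟨hx.1, fun h => hx.2.2 ⟨m, hm, x - m, h, hm0, sub_ne_zero.mpr hxm, by ring⟩⟩

lemma add_mem_Ap_of_mem_PF (hf : f ∈ PF S) (hm : m ∈ S) (hm0 : m ≠ 0) : f + m ∈ Ap S m :=
  ⟨hf.2 m hm hm0, by simpa using hf.1⟩

lemma Ap_eq_of_modEq (hm : m ∈ S) (hx : x ∈ Ap S m) (hy : y ∈ Ap S m)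
    (hxy : x ≡ y [ZMOD m]) : x = y := by
  obtain ⟨c, hc⟩ := Int.modEq_iff_dvd.mp hxy
  rcases lt_trichotomy c 0 with hc0 | rfl | hc0
  · refine absurd ?_ hx.2
    have : x - m = y + (-c - 1).toNat • m := by
      rw [nsmul_eq_mul, Int.toNat_of_nonneg (by omega)]; linarith
    exact this ▸ S.add_mem hy.1 (S.nsmul_mem hm _)
  · linarith
  · refine absurd ?_ hy.2
    have : y - m = x + (c - 1).toNat • m := by
      rw [nsmul_eq_mul, Int.toNat_of_nonneg (by omega)]; linarith
    exact this ▸ S.add_mem hx.1 (S.nsmul_mem hm _)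

lemma exists_mem_Ap_modEq (hS : ∀ x ∈ S, 0 ≤ x) (hfin : {z : ℤ | 0 ≤ z ∧ z ∉ S}.Finite)
    (hm0 : 0 < m) (r : ℤ) : ∃ x ∈ Ap S m, x ≡ r [ZMOD m] := by
  obtain ⟨B, hB⟩ := hfin.bddAbove
  set k := (max B 0 - r + 1).toNat
  have hk : max B 0 - r + 1 ≤ k * m :=
    (Int.self_le_toNat _).trans (le_mul_of_one_le_right (by positivity) hm0)
  have hclass : r + k * m ∈ S := by
    by_contra hc
    have := hB ⟨by omega, hc⟩
    omega
  obtain ⟨x, ⟨hxS, hxr⟩, hleast⟩ := Int.exists_least_of_bdd (P := fun z => z ∈ S ∧ z ≡ r [ZMOD m])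
    ⟨0, fun z hz => hS z hz.1⟩ ⟨_, hclass, by simp [Int.ModEq]⟩
  refine ⟨x, ⟨hxS, fun h => ?_⟩, hxr⟩
  have := hleast (x - m) ⟨h, Int.ModEq.trans (by simp [Int.ModEq]) hxr⟩
  omega

lemma ncard_Ap (hS : ∀ x ∈ S, 0 ≤ x) (hfin : {z : ℤ | 0 ≤ z ∧ z ∉ S}.Finite) {m : ℕ}
    (hm : (m : ℤ) ∈ S) (hm0 : 0 < m) : (Ap S m).ncard = m := by
  have : NeZero m := ⟨hm0.ne'⟩
  have hsurj : (fun x : ℤ => (x : ZMod m)) '' Ap S m = Set.univ := by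
    refine Set.eq_univ_of_forall fun r => ?_
    obtain ⟨x, hx, hxr⟩ := exists_mem_Ap_modEq hS hfin (m := m) (by exact_mod_cast hm0) r.val
    exact ⟨x, hx, by simpa using (ZMod.intCast_eq_intCast_iff _ _ m).mpr hxr⟩
  have hinj : Set.InjOn (fun x : ℤ => (x : ZMod m)) (Ap S m) := fun x hx y hy hxy =>
    Ap_eq_of_modEq hm hx hy ((ZMod.intCast_eq_intCast_iff _ _ m).mp hxy)
  rw [← hinj.ncard_image, hsurj, Set.ncard_univ, Nat.card_zmod]

lemma mem_of_add_mem_Ap_eq_union {A : Set ℤ} (hA : Ap S m = A ∪ {y + z}) (hy : y ∈ S)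
    (hz : z ∈ S) (hz0 : z ≠ 0) : y ∈ A := by
  have hyzAp : y + z ∈ Ap S m := by rw [hA]; exact Or.inr rfl
  have hyAp := mem_Ap_of_add_mem_Ap hz hy hyzAp
  rw [hA] at hyAp
  exact hyAp.resolve_right fun h => hz0 (by simpa using h)

lemma exists_add_of_Ap_eq_union {A : Set ℤ} {w : ℤ} (hA : Ap S m = A ∪ {w}) (h0 : 0 ∈ A)
    (hwA : w ∉ A) (hw : w ∉ MinGens S) : ∃ y ∈ A, ∃ z ∈ A, y ≠ 0 ∧ z ≠ 0 ∧ w = y + z := by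
  have hwAp : w ∈ Ap S m := hA ▸ Or.inr rfl
  obtain ⟨y, hy, z, hz, hy0, hz0, rfl⟩ : ∃ y ∈ S, ∃ z ∈ S, y ≠ 0 ∧ z ≠ 0 ∧ y + z = w := by
    by_contra hdec
    exact hw ⟨hwAp.1, fun hw0 => hwA (hw0 ▸ h0), hdec⟩
  exact ⟨y, mem_of_add_mem_Ap_eq_union hA hy hz hz0,
    z, mem_of_add_mem_Ap_eq_union (add_comm y z ▸ hA) hz hy hy0, hy0, hz0, rfl⟩

/-- `f ↦ f + m` maps `PF S` into `Ap S m`, and it misses `0`, `y` and `z` when `y + z ∈ Ap S m`: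
were `f + m` one of them, `y + z - m` or `y - m` would be `f` plus a nonzero element of `S`. -/
lemma ncard_PF_add_three_le (hfinAp : (Ap S m).Finite) (hm : m ∈ S) (hm0 : m ≠ 0)
    (hy : y ∈ S) (hz : z ∈ S) (hy0 : y ≠ 0) (hz0 : z ≠ 0) (hyz : y ≠ z) (hw : y + z ∈ Ap S m) :
    (PF S).ncard + 3 ≤ (Ap S m).ncard := by
  have hyAp := mem_Ap_of_add_mem_Ap hz hy hw
  have hzAp := mem_Ap_of_add_mem_Ap hy hz (add_comm y z ▸ hw)
  have hsub : ({0, y, z} : Set ℤ) ⊆ Ap S m := by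
    simp [Set.insert_subset_iff, zero_mem_Ap hyAp, hyAp, hzAp]
  have hshift : (· + m) '' PF S ⊆ Ap S m \ {0, y, z} := by
    rintro _ ⟨f, hf, rfl⟩
    refine ⟨add_mem_Ap_of_mem_PF hf hm hm0, ?_⟩
    simp only [Set.mem_insert_iff, Set.mem_singleton_iff]
    rintro (h | h | h)
    · exact hyAp.2 (by rw [show y - m = f + y by linarith]; exact hf.2 y hy hy0)
    · exact hw.2 (by rw [show y + z - m = f + z by linarith]; exact hf.2 z hz hz0)
    · exact hw.2 (by rw [show y + z - m = f + y by linarith]; exact hf.2 y hy hy0)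
  have hcard3 : ({0, y, z} : Set ℤ).ncard = 3 :=
    Set.ncard_eq_three.mpr ⟨0, y, z, hy0.symm, hz0.symm, hyz, rfl⟩
  have h3 := Set.ncard_le_ncard hsub hfinAp
  calc (PF S).ncard + 3 = ((· + m) '' PF S).ncard + 3 := by
        rw [Set.ncard_image_of_injective _ (add_left_injective m)]
    _ ≤ (Ap S m \ {0, y, z}).ncard + 3 :=
        Nat.add_le_add_right (Set.ncard_le_ncard hshift hfinAp.sdiff) 3
    _ = (Ap S m).ncard := by
        rw [Set.ncard_sdiff hsub (hfinAp.subset hsub)]; omega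

lemma insert_zero_subset_Ap {n : ℕ} [NeZero n] {a : Fin n → ℕ} (hinj : Function.Injective a)
    (hmin : MinGens S = Set.range fun i => (a i : ℤ)) (hne : (Ap S (a 0)).Nonempty) :
    insert (0 : ℤ) {x : ℤ | ∃ i : Fin n, i ≠ 0 ∧ x = (a i : ℤ)} ⊆ Ap S (a 0) := by
  have hgen (i : Fin n) : (a i : ℤ) ∈ MinGens S := hmin ▸ ⟨i, rfl⟩
  rintro x (rfl | ⟨i, hi, rfl⟩)
  · exact zero_mem_Ap hne.some_mem
  · exact mem_Ap_of_mem_MinGens (hgen i) (hgen 0).1 (hgen 0).2.1 (by exact_mod_cast hinj.ne hi)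

lemma notMem_MinGens_of_notMem_insert_zero {n : ℕ} [NeZero n] {a : Fin n → ℕ} {w : ℤ}
    (hmin : MinGens S = Set.range fun i => (a i : ℤ)) (hw : w ∈ Ap S (a 0))
    (hwA : w ∉ insert (0 : ℤ) {x : ℤ | ∃ i : Fin n, i ≠ 0 ∧ x = (a i : ℤ)}) :
    w ∉ MinGens S := by
  rw [hmin]
  rintro ⟨i, rfl⟩
  by_cases hi : i = 0
  · exact hw.2 (by simp [hi])
  · exact hwA (Or.inr ⟨i, hi, rfl⟩)

end Apery

theorem stmt9_general (n : ℕ) [NeZero n] (a : Fin n → ℕ)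
    (hinj : Function.Injective a)
    (H : Set ℤ)
    (hH : H = (AddSubmonoid.closure (Set.range fun i => ((a i : ℤ))) : AddSubmonoid ℤ))
    (hfin : {z : ℤ | 0 ≤ z ∧ z ∉ H}.Finite)
    (hmin : MinGens H = Set.range fun i => ((a i : ℤ)))
    (ℓ : ℕ) (hℓ : (ℓ : ℤ) = (a 0 : ℤ) - n + 1) (hℓ2 : ℓ = 2)
    (h α : ℤ) (hα : 0 < α)
    (hPF : PF H = {x : ℤ | ∃ i : ℕ, 1 ≤ i ∧ i ≤ n - 1 ∧ x = h + (i : ℤ) * α}) :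
    ∃ lam : Fin n, lam ≠ 0 ∧
      Ap H (a 0) = insert (0 : ℤ) {x : ℤ | ∃ i : Fin n, i ≠ 0 ∧ x = (a i : ℤ)} ∪
        {2 * (a lam : ℤ)} := by
  subst hH hℓ2
  set S := AddSubmonoid.closure (Set.range fun i => (a i : ℤ))
  set A₀ := insert (0 : ℤ) {x : ℤ | ∃ i : Fin n, i ≠ 0 ∧ x = (a i : ℤ)}
  have haS (i : Fin n) : (a i : ℤ) ∈ S := AddSubmonoid.subset_closure ⟨i, rfl⟩
  have ha_ne (i : Fin n) : (a i : ℤ) ≠ 0 := (hmin.symm ▸ ⟨i, rfl⟩ : (a i : ℤ) ∈ MinGens S).2.1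
  have hAp : (Ap S (a 0)).ncard = n + 1 := by
    have hS (x : ℤ) : x ∈ S → 0 ≤ x := nonneg_of_mem_closure (by rintro _ ⟨i, rfl⟩; positivity)
    rw [ncard_Ap hS hfin (haS 0) (by omega)]
    push_cast at hℓ
    omega
  have hApfin : (Ap S (a 0)).Finite := Set.finite_of_ncard_pos (by omega)
  have hA₀ : A₀ ⊆ Ap S (a 0) :=
    insert_zero_subset_Ap hinj hmin (Set.nonempty_of_ncard_ne_zero (by omega))
  obtain ⟨w, hwA₀, hApw⟩ := exists_eq_union_singleton_of_ncard_eq_succ hA₀ hApfin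
    (by rw [hAp, ncard_insert_zero_setOf_ne_zero hinj (by exact_mod_cast ha_ne)])
  have hwAp : w ∈ Ap S (a 0) := hApw ▸ Or.inr rfl
  obtain ⟨y, hyA₀, z, hzA₀, hy0, hz0, rfl⟩ := exists_add_of_Ap_eq_union hApw (Or.inl rfl) hwA₀
    (notMem_MinGens_of_notMem_insert_zero hmin hwAp hwA₀)
  obtain ⟨i, hi, rfl⟩ := hyA₀.resolve_left hy0
  obtain ⟨j, -, rfl⟩ := hzA₀.resolve_left hz0
  obtain rfl : i = j := by
    by_contra hij
    have := ncard_PF_add_three_le hApfin (haS 0) (ha_ne 0) (haS i) (haS j) (ha_ne i) (ha_ne j)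
      (by exact_mod_cast hinj.ne hij) hwAp
    rw [hPF, ncard_setOf_add_mul h hα.ne', hAp] at this
    omega
  exact ⟨i, hi, by rw [hApw, two_mul]⟩

theorem stmt9 (k : Type*) [Field k] (n : ℕ) [NeZero n] (hn : 3 ≤ n) (a : Fin n → ℕ)
    (hpos : ∀ i, 0 < a i) (hinj : Function.Injective a)
    (hmult : ∀ i : Fin n, i ≠ 0 → a 0 < a i)
    (H : Set ℤ)
    (hH : H = (AddSubmonoid.closure (Set.range fun i => ((a i : ℤ))) : AddSubmonoid ℤ))
    (hfin : {z : ℤ | 0 ≤ z ∧ z ∉ H}.Finite)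
    (hmin : MinGens H = Set.range fun i => ((a i : ℤ)))
    (ℓ : ℕ) (hℓ : (ℓ : ℤ) = (a 0 : ℤ) - n + 1) (hℓ2 : ℓ = 2)
    (hstretched : Stretched ((NSRing k a) ⧸ (Ideal.span {tMult k a})))
    (h α : ℤ) (hh : 0 ≤ h) (hα : 0 < α)
    (hPF : PF H = {x : ℤ | ∃ i : ℕ, 1 ≤ i ∧ i ≤ n - 1 ∧ x = h + (i : ℤ) * α}) :
    ∃ lam : Fin n, lam ≠ 0 ∧
      Ap H (a 0) = insert (0 : ℤ) {x : ℤ | ∃ i : Fin n, i ≠ 0 ∧ x = (a i : ℤ)} ∪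
        {2 * (a lam : ℤ)} :=
  stmt9_general n a hinj H hH hfin hmin ℓ hℓ hℓ2 h α hα hPF
end

section
/- Let ℓ ≥ 2, n ≥ 3, a = ℓ + n - 1, and let b be a positive integer. Suppose H is a numerical semigroup with multiplicity a and embedding dimension n whose Apéry set Ap(H, a) equals {0, b, 2b, ..., ℓb} ∪ {ℓb + α, ℓb + 2α, ..., ℓb + (n-2)α} for some α > 0 (with these ℓ + n - 1 = a elements forming a complete system of representatives modulo a). Then gcd(a, b) = 1 implies α ≡ b (mod a). -/
open Finset

namespace ZMod

variable {a : ℕ}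

lemma natCast_inj_of_lt {i j : ℕ} (hi : i < a) (hj : j < a) (h : (i : ZMod a) = j) : i = j :=
  CharP.natCast_injOn_Iio (ZMod a) a hi hj h

lemma natCast_ne_natCast_of_lt_of_le {k t : ℕ} (hk : 0 < k) (hkt : k < t) (hta : t ≤ a) :
    (k : ZMod a) ≠ t := by
  intro h
  rcases hta.lt_or_eq with hlt | rfl
  · exact hkt.ne (natCast_inj_of_lt (hkt.trans hlt) hlt h)
  · rw [ZMod.natCast_self, ZMod.natCast_eq_zero_iff] at h
    exact hk.ne' (Nat.eq_zero_of_dvd_of_lt h hkt)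

theorem eq_one_of_image_mul_eq {m : ℕ} (hm : 1 ≤ m) (hma : m + 2 ≤ a) {c : ZMod a}
    (hc : ((Icc 1 m).image (Nat.cast : ℕ → ZMod a)).image (· * c) = (Icc 1 m).image Nat.cast) :
    c = 1 := by
  have mem_image_cast {k : ℕ} (hk1 : 1 ≤ k) (hkm : k ≤ m) :
      (k : ZMod a) ∈ (Icc 1 m).image (Nat.cast : ℕ → ZMod a) :=
    mem_image_of_mem _ (mem_Icc.2 ⟨hk1, hkm⟩)
  have hc_mem : c ∈ (Icc 1 m).image (Nat.cast : ℕ → ZMod a) :=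
    hc ▸ mem_image.2 ⟨1, by simpa using mem_image_cast le_rfl hm, one_mul c⟩
  obtain ⟨d, hd, rfl⟩ := mem_image.1 hc_mem
  rw [mem_Icc] at hd
  obtain rfl | hd2 : d = 1 ∨ 2 ≤ d := by omega
  · exact Nat.cast_one
  have eq_m_mul {j : ℕ} (hj : 1 ≤ j) (hjd : m + 1 ≤ j + d) (hjd' : j + d ≤ m + 2) :
      (j : ZMod a) = m * d := by
    obtain ⟨_, hiS, hij⟩ := mem_image.1 <| hc.symm ▸ mem_image_cast hj (by omega)
    obtain ⟨i, hi, rfl⟩ := mem_image.1 hiS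
    rw [mem_Icc] at hi
    obtain rfl | him : i = m ∨ i + 1 ≤ m := by omega
    · exact hij.symm
    obtain ⟨k, hk, hkj⟩ := mem_image.1 <| hc ▸ mem_image.2 ⟨_, mem_image_cast (by omega) him, rfl⟩
    rw [mem_Icc] at hk
    refine absurd ?_ (natCast_ne_natCast_of_lt_of_le (a := a) (t := j + d) hk.1 (by omega)
      (by omega))
    rw [hkj]
    push_cast
    rw [add_mul, one_mul, ← hij]
  have := natCast_inj_of_lt (by omega) (by omega)
    ((eq_m_mul (j := m + 1 - d) (by omega) (by omega) (by omega)).trans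
      (eq_m_mul (j := m + 2 - d) (by omega) (by omega) (by omega)).symm)
  omega

theorem eq_of_forall_eq_mul_or_eq_add_mul {ℓ m : ℕ} (hℓ : 1 ≤ ℓ) (hm : 1 ≤ m)
    (ha : a = ℓ + m + 1) {b α : ZMod a} (hb : IsUnit b)
    (hcover : ∀ z : ZMod a, (∃ i ≤ ℓ, z = i * b) ∨ ∃ i ∈ Icc 1 m, z = ℓ * b + i * α) :
    α = b := by
  obtain ⟨u, rfl⟩ := hb
  set c := α * ↑u⁻¹
  have hsub : (Icc 1 m).image (Nat.cast : ℕ → ZMod a) ⊆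
      ((Icc 1 m).image Nat.cast).image (· * c) := by
    intro z hz
    obtain ⟨j, hj, rfl⟩ := mem_image.1 hz
    rw [mem_Icc] at hj
    rcases hcover ((ℓ + j : ℕ) * u) with ⟨i, hi, h⟩ | ⟨i, hi, h⟩
    · have := natCast_inj_of_lt (by omega) (by omega) ((Units.mul_left_inj u).1 h)
      omega
    · refine mem_image.2 ⟨i, mem_image_of_mem _ hi, ?_⟩
      push_cast at h
      calc (i : ZMod a) * c = i * α * ↑u⁻¹ := by ring
        _ = j := by rw [Units.mul_inv_eq_iff_eq_mul]; linear_combination h.symm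
  have hc : c = 1 :=
    eq_one_of_image_mul_eq hm (by omega) (eq_of_subset_of_card_le hsub card_image_le).symm
  calc α = c * u := by simp [c]
    _ = u := by rw [hc, one_mul]

end ZMod

namespace IsNumericalSemigroup

variable {H : Set ℤ}

lemma exists_forall_ge_mem (hH : IsNumericalSemigroup H) : ∃ M, ∀ z, M ≤ z → z ∈ H := by
  obtain ⟨M, hM⟩ := hH.2.2.2.bddAbove
  refine ⟨max M 0 + 1, fun z hz => by_contra fun hzH => ?_⟩
  have := hM ⟨by omega, hzH⟩
  omega

lemma exists_mem_modEq (hH : IsNumericalSemigroup H) {u : ℤ} (hu : 0 < u) (z : ℤ) :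
    ∃ x ∈ H, x ≡ z [ZMOD u] := by
  obtain ⟨M, hM⟩ := hH.exists_forall_ge_mem
  refine ⟨z + u * |M - z|, hM _ ?_, Int.add_mul_emod_self_left z u _⟩
  nlinarith [le_abs_self (M - z), abs_nonneg (M - z)]

lemma exists_mem_apery_modEq (hH : IsNumericalSemigroup H) {u : ℤ} (hu : 0 < u) (z : ℤ) :
    ∃ x ∈ Ap H u, x ≡ z [ZMOD u] := by
  obtain ⟨x, ⟨hxH, hxz⟩, hmin⟩ :=
    Int.exists_least_of_bdd (P := fun x => x ∈ H ∧ x ≡ z [ZMOD u])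
      ⟨0, fun x hx => hH.2.2.1 x hx.1⟩ (hH.exists_mem_modEq hu z)
  refine ⟨x, ⟨hxH, fun hx' => ?_⟩, hxz⟩
  have := hmin (x - u) ⟨hx', (Int.sub_emod_right x u).trans hxz⟩
  omega

end IsNumericalSemigroup

theorem stmt10_general (ℓ n : ℕ) (hℓ : 2 ≤ ℓ) (hn : 3 ≤ n) (a : ℕ) (ha : a = ℓ + n - 1)
    (b : ℤ) (α : ℤ)
    (H : Set ℤ) (hH : IsNumericalSemigroup H)
    (hAp : Ap H a = {x : ℤ | ∃ i : ℕ, i ≤ ℓ ∧ x = (i : ℤ) * b} ∪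
        {x : ℤ | ∃ i : ℕ, 1 ≤ i ∧ i ≤ n - 2 ∧ x = (ℓ : ℤ) * b + (i : ℤ) * α}) :
    Int.gcd (a : ℤ) b = 1 → α ≡ b [ZMOD (a : ℤ)] := by
  intro hab
  have hb : IsUnit (b : ZMod a) :=
    (ZMod.unitOfIsCoprime b (Int.isCoprime_iff_gcd_eq_one.2 (by rwa [Int.gcd_comm]))).isUnit
  refine (ZMod.intCast_eq_intCast_iff α b a).1 <|
    ZMod.eq_of_forall_eq_mul_or_eq_add_mul (ℓ := ℓ) (m := n - 2) (by omega) (by omega)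
      (by omega) hb fun z => ?_
  obtain ⟨y, rfl⟩ := ZMod.intCast_surjective z
  obtain ⟨x, hx, hxy⟩ := hH.exists_mem_apery_modEq (u := a) (by omega) y
  rw [← (ZMod.intCast_eq_intCast_iff _ _ _).2 hxy]
  rcases hAp ▸ hx with ⟨i, hi, rfl⟩ | ⟨i, hi1, hi2, rfl⟩
  · exact .inl ⟨i, hi, by push_cast; ring⟩
  · exact .inr ⟨i, mem_Icc.2 ⟨hi1, hi2⟩, by push_cast; ring⟩

theorem stmt10 (ℓ n : ℕ) (hℓ : 2 ≤ ℓ) (hn : 3 ≤ n) (a : ℕ) (ha : a = ℓ + n - 1)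
    (b : ℤ) (hb : 0 < b) (α : ℤ) (hα : 0 < α)
    (H : Set ℤ) (hH : IsNumericalSemigroup H)
    (hmult : IsLeast {x ∈ H | x ≠ 0} (a : ℤ))
    (hedim : (MinGens H).ncard = n)
    (hAp : Ap H a = {x : ℤ | ∃ i : ℕ, i ≤ ℓ ∧ x = (i : ℤ) * b} ∪
        {x : ℤ | ∃ i : ℕ, 1 ≤ i ∧ i ≤ n - 2 ∧ x = (ℓ : ℤ) * b + (i : ℤ) * α}) :
    Int.gcd (a : ℤ) b = 1 → α ≡ b [ZMOD (a : ℤ)] :=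
  stmt10_general ℓ n hℓ hn a ha b α H hH hAp
end

section
/- Let ℓ ≥ 2, n ≥ 3, a = ℓ + n - 1, and let a, b be coprime positive integers. If the set {0, b, 2b, ..., ℓb} ∪ {ℓb - α, ℓb - 2α, ..., ℓb - (n-2)α} is a complete system of representatives modulo a for some integer α, then b ≡ -α (mod a). -/
/-!
Reduce modulo `a` and write `m = n - 2`, so `a = ℓ + m + 1`. Since `b` is a unit, the multiples
`0, b, …, (a - 1) b` are distinct, so `(ℓ + k) b` for `1 ≤ k ≤ m` must lie in the second
progression: `k b = -i α` with `1 ≤ i ≤ m`. For `k = 1` this gives `b = -c α`, and then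
multiplication by `c` maps `{1, …, m}` into itself. Looking at where `ℓ b + t α` lies for
`1 ≤ t ≤ ℓ` shows, after a counting argument, that it also maps `{1, …, ℓ}` into itself.
If `c ≥ 2`, the first multiple of `c` beyond `r = min ℓ m` is at most `2r < a`, so it cannot be
reduced back into `{1, …, r}`. Hence `c = 1`, i.e. `b = -α`.
-/

open Finset

namespace ZMod

lemma natCast_inj_of_lt_s11 {a x y : ℕ} (hx : x < a) (hy : y < a) (h : (x : ZMod a) = y) : x = y := by
  rwa [natCast_eq_natCast_iff', Nat.mod_eq_of_lt hx, Nat.mod_eq_of_lt hy] at h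

lemma natCast_mul_ne_zero_of_isUnit {a n : ℕ} {u : ZMod a} (hu : IsUnit u) (hn0 : 0 < n)
    (hna : n < a) : (n : ZMod a) * u ≠ 0 := by
  rw [Ne, hu.mul_left_eq_zero, natCast_eq_zero_iff]
  exact fun hdvd => absurd (Nat.le_of_dvd hn0 hdvd) (by omega)

lemma isUnit_intCast_of_gcd_eq_one {a : ℕ} {b : ℤ} (h : Int.gcd (a : ℤ) b = 1) :
    IsUnit (b : ZMod a) := by
  have := (Int.isCoprime_iff_gcd_eq_one.2 h).map (Int.castRingHom (ZMod a))
  simpa [isCoprime_zero_left] using this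

lemma exists_intCast_eq_of_forall_modEq {a : ℕ} {S : Set ℤ}
    (h : ∀ z : ℤ, ∃ s ∈ S, s ≡ z [ZMOD a]) (z : ZMod a) : ∃ s ∈ S, (s : ZMod a) = z := by
  obtain ⟨w, rfl⟩ := intCast_surjective z
  obtain ⟨s, hs, hsw⟩ := h w
  exact ⟨s, hs, (intCast_eq_intCast_iff _ _ _).2 hsw⟩

lemma eq_one_of_mul_mem_Icc {a ℓ m c : ℕ} (hlt : ℓ + m < a) (hℓ : 1 ≤ ℓ) (hc : c ∈ Icc 1 m)
    (hmulℓ : ∀ k ∈ Icc 1 ℓ, ∃ t ∈ Icc 1 ℓ, ((k * c : ℕ) : ZMod a) = t)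
    (hmulm : ∀ k ∈ Icc 1 m, ∃ t ∈ Icc 1 m, ((k * c : ℕ) : ZMod a) = t) : c = 1 := by
  rw [mem_Icc] at hc
  by_contra hc1
  obtain ⟨r, hr⟩ : ∃ r, r = min ℓ m := ⟨_, rfl⟩
  obtain ⟨k, hk1, hkr, hrk, hkc⟩ : ∃ k, 1 ≤ k ∧ k ≤ r ∧ r < k * c ∧ k * c ≤ r + c := by
    refine ⟨r / c + 1, Nat.le_add_left 1 _, ?_, ?_, ?_⟩
    · have := Nat.div_le_div_left (a := r) (show 2 ≤ c by omega) (by omega)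
      omega
    · rw [add_one_mul]; exact Nat.lt_div_mul_add (by omega)
    · rw [add_one_mul]; have := Nat.div_mul_le_self r c; omega
  have bound {L : ℕ} (hL : r ≤ L) (hLa : L < a)
      (hmul : ∀ k ∈ Icc 1 L, ∃ t ∈ Icc 1 L, ((k * c : ℕ) : ZMod a) = t) :
      k * c ≤ L := by
    obtain ⟨t, ht, hkt⟩ := hmul k (mem_Icc.2 ⟨hk1, by omega⟩)
    rw [mem_Icc] at ht
    rw [natCast_inj_of_lt_s11 (by omega) (by omega) hkt]
    exact ht.2
  have hkcℓ := bound (by omega) (by omega) hmulℓ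
  have hkcm := bound (by omega) (by omega) hmulm
  omega

end ZMod

lemma Finset.image_eq_image_of_subset_of_injOn {ι β : Type*} [DecidableEq β] {s : Finset ι}
    {f g : ι → β} (hg : Set.InjOn g s) (h : s.image g ⊆ s.image f) : s.image g = s.image f :=
  eq_of_subset_of_card_le h (by rw [card_image_of_injOn hg]; exact card_image_le)

section Cover

open ZMod

variable {a ℓ m : ℕ} {b α : ZMod a}

def ProgressionsCover (ℓ m : ℕ) (b α : ZMod a) : Prop :=
  ∀ z : ZMod a, (∃ j ≤ ℓ, z = j * b) ∨ ∃ i ∈ Icc 1 m, z = ℓ * b - i * α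

lemma ProgressionsCover.exists_mul_eq_neg (hcov : ProgressionsCover ℓ m b α)
    (ha : a = ℓ + m + 1) (hb : IsUnit b) {k : ℕ} (hk : k ∈ Icc 1 m) :
    ∃ i ∈ Icc 1 m, (k : ZMod a) * b = -(i * α) := by
  rw [mem_Icc] at hk
  rcases hcov ((ℓ + k : ℕ) * b) with ⟨j, hj, hje⟩ | ⟨i, hi, hie⟩
  · refine absurd ?_ (natCast_mul_ne_zero_of_isUnit hb (n := ℓ + k - j) (by omega) (by omega))
    push_cast [Nat.cast_sub (show j ≤ ℓ + k by omega)] at hje ⊢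
    linear_combination hje
  · exact ⟨i, hi, by push_cast at hie; linear_combination hie⟩

lemma ProgressionsCover.mem_image_mul (hcov : ProgressionsCover ℓ m b α) (ha : a = ℓ + m + 1)
    (hα : IsUnit α) {c : ℕ} (hbc : b = -(c * α)) {t : ℕ} (ht : t ∈ Icc 1 ℓ) :
    ∃ j ∈ Icc 1 ℓ, (t : ZMod a) = (j * c : ℕ) := by
  rw [mem_Icc] at ht
  rcases hcov (ℓ * b + t * α) with ⟨j, hj, hje⟩ | ⟨i, hi, hie⟩
  · have hjℓ : j < ℓ := by
      refine lt_of_le_of_ne hj fun hjℓ => natCast_mul_ne_zero_of_isUnit hα (n := t) (by omega)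
        (by omega) ?_
      subst hjℓ
      linear_combination hje
    refine ⟨ℓ - j, mem_Icc.2 ⟨by omega, by omega⟩, hα.mul_right_cancel ?_⟩
    push_cast [Nat.cast_sub hjℓ.le]
    linear_combination hje + ((j : ZMod a) - ℓ) * hbc
  · rw [mem_Icc] at hi
    refine absurd ?_ (natCast_mul_ne_zero_of_isUnit hα (n := t + i) (by omega) (by omega))
    push_cast
    linear_combination hie

lemma ProgressionsCover.natCast_mul_mem_Icc (hcov : ProgressionsCover ℓ m b α)
    (ha : a = ℓ + m + 1) (hα : IsUnit α) {c : ℕ} (hbc : b = -(c * α)) :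
    ∀ k ∈ Icc 1 ℓ, ∃ t ∈ Icc 1 ℓ, ((k * c : ℕ) : ZMod a) = t := by
  have himage := Finset.image_eq_image_of_subset_of_injOn (s := Icc 1 ℓ)
    (g := ((↑) : ℕ → ZMod a)) (f := fun j => ((j * c : ℕ) : ZMod a))
    (fun x hx y hy => natCast_inj_of_lt_s11 (by simp at hx; omega) (by simp at hy; omega))
    (fun x hx => by
      obtain ⟨t, ht, rfl⟩ := mem_image.1 hx
      obtain ⟨j, hj, htj⟩ := hcov.mem_image_mul ha hα hbc ht
      exact mem_image.2 ⟨j, hj, htj.symm⟩)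
  intro k hk
  have hkc : ((k * c : ℕ) : ZMod a) ∈ (Icc 1 ℓ).image ((↑) : ℕ → ZMod a) := by
    rw [himage]
    exact mem_image_of_mem (fun j => ((j * c : ℕ) : ZMod a)) hk
  obtain ⟨t, ht, hkt⟩ := mem_image.1 hkc
  exact ⟨t, ht, hkt.symm⟩

theorem ProgressionsCover.eq_neg (hcov : ProgressionsCover ℓ m b α) (ha : a = ℓ + m + 1)
    (hℓ : 1 ≤ ℓ) (hm : 1 ≤ m) (hb : IsUnit b) : b = -α := by
  obtain ⟨c, hc, hbc⟩ := hcov.exists_mul_eq_neg ha hb (mem_Icc.2 ⟨le_rfl, hm⟩)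
  rw [Nat.cast_one, one_mul] at hbc
  have hα : IsUnit α := by
    rw [hbc, IsUnit.neg_iff] at hb
    exact isUnit_of_mul_isUnit_right hb
  have hmulm : ∀ k ∈ Icc 1 m, ∃ i ∈ Icc 1 m, ((k * c : ℕ) : ZMod a) = i := by
    intro k hk
    obtain ⟨i, hi, hki⟩ := hcov.exists_mul_eq_neg ha hb hk
    refine ⟨i, hi, hα.mul_right_cancel ?_⟩
    push_cast
    linear_combination (k : ZMod a) * hbc - hki
  obtain rfl := eq_one_of_mul_mem_Icc (by omega) hℓ hc (hcov.natCast_mul_mem_Icc ha hα hbc) hmulm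
  simpa using hbc

end Cover

theorem stmt11_general (ℓ n : ℕ) (hℓ : 2 ≤ ℓ) (hn : 3 ≤ n) (a : ℕ) (ha : a = ℓ + n - 1)
    (b : ℤ) (hcop : Int.gcd (a : ℤ) b = 1) (α : ℤ)
    (hcomp : ∀ z : ℤ, ∃! s, s ∈ ({x : ℤ | ∃ i : ℕ, i ≤ ℓ ∧ x = (i : ℤ) * b} ∪
        {x : ℤ | ∃ i : ℕ, 1 ≤ i ∧ i ≤ n - 2 ∧ x = (ℓ : ℤ) * b - (i : ℤ) * α}) ∧
        s ≡ z [ZMOD (a : ℤ)]) :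
    b ≡ -α [ZMOD (a : ℤ)] := by
  have hcov : ProgressionsCover ℓ (n - 2) (b : ZMod a) (α : ZMod a) := by
    intro z
    obtain ⟨s, hs, rfl⟩ := ZMod.exists_intCast_eq_of_forall_modEq (fun w => (hcomp w).exists) z
    rcases hs with ⟨j, hj, rfl⟩ | ⟨i, hi1, hi2, rfl⟩
    · exact Or.inl ⟨j, hj, by push_cast; ring⟩
    · exact Or.inr ⟨i, mem_Icc.2 ⟨hi1, hi2⟩, by push_cast; ring⟩
  have hbα := hcov.eq_neg (by omega) (by omega) (by omega) (ZMod.isUnit_intCast_of_gcd_eq_one hcop)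
  exact (ZMod.intCast_eq_intCast_iff _ _ _).1 (by push_cast; exact hbα)

theorem stmt11 (ℓ n : ℕ) (hℓ : 2 ≤ ℓ) (hn : 3 ≤ n) (a : ℕ) (ha : a = ℓ + n - 1)
    (b : ℤ) (hb : 0 < b) (hcop : Int.gcd (a : ℤ) b = 1) (α : ℤ)
    (hcomp : ∀ z : ℤ, ∃! s, s ∈ ({x : ℤ | ∃ i : ℕ, i ≤ ℓ ∧ x = (i : ℤ) * b} ∪
        {x : ℤ | ∃ i : ℕ, 1 ≤ i ∧ i ≤ n - 2 ∧ x = (ℓ : ℤ) * b - (i : ℤ) * α}) ∧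
        s ≡ z [ZMOD (a : ℤ)]) :
    b ≡ -α [ZMOD (a : ℤ)] :=
  stmt11_general ℓ n hℓ hn a ha b hcop α hcomp
end

section
/- Let ℓ ≥ 2, n ≥ 3, α > 0, h₁ ≥ 0 be integers; set a = ℓ + n - 1 and b = (h₁+1)a + α, and assume gcd(a, α) = 1. Then H = ⟨a, b, ℓb + α, ℓb + 2α, ..., ℓb + (n-2)α⟩ is a numerical semigroup with multiplicity a, embedding dimension n, Apéry set Ap(H, a) = {0, b, 2b, ..., ℓb} ∪ {ℓb + α, ..., ℓb + (n-2)α}, and PF(H) forms an arithmetic sequence {h+α, h+2α, ..., h+(n-1)α} where h = h₁a + (ℓ-1)b. -/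
/-! Write `w i = min(i, ℓ)·(h₁ + 1)·a + i·α`, so that `w i = i·b` for `i ≤ ℓ` and
`w (ℓ + j) = ℓ·b + j·α`. Since `gcd(a, α) = 1`, every integer is uniquely `w i + m·a` with
`0 ≤ i < a`. The sum of two `w`'s is again a `w` plus a nonnegative multiple ("carry") of `a`,
so `H = {w i + m·a | i < a, 0 ≤ m}`, and an element of this form lies in `H` iff `m ≥ 0`.
Everything is then read off: `Ap(H, a) = {w i}`; `w j - a` is pseudo-Frobenius iff adding any
`w k` with `k ≥ 1` carries, i.e. iff `j ≥ ℓ`; and the minimal generators are `a` together with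
the `w i` admitting no carry-free splitting `i = j + k`, namely `i = 1` and `i > ℓ`. -/

namespace ArithPF

/-- The element of `Ap(H, a)` congruent to `i * α` modulo `a`, for `b = c * a + α`. -/
def aperyElt (ℓ a : ℕ) (c α : ℤ) (i : ℕ) : ℤ := (min i ℓ : ℕ) * c * a + i * α

def aperySpan (ℓ a : ℕ) (c α : ℤ) : Set ℤ :=
  {x | ∃ i < a, ∃ m : ℤ, 0 ≤ m ∧ x = aperyElt ℓ a c α i + m * a}

def generators (ℓ n a : ℕ) (b α : ℤ) : Set ℤ :=
  {(a : ℤ), b} ∪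
    {x : ℤ | ∃ i : ℕ, 1 ≤ i ∧ i ≤ n - 2 ∧ x = (ℓ : ℤ) * b + (i : ℤ) * α}

variable {ℓ n a : ℕ} {b c α : ℤ}

@[simp]
lemma aperyElt_zero : aperyElt ℓ a c α 0 = 0 := by
  simp [aperyElt]

lemma aperyElt_of_le {i : ℕ} (hi : i ≤ ℓ) : aperyElt ℓ a c α i = i * (c * a + α) := by
  simp only [aperyElt, min_eq_left hi]
  ring

lemma aperyElt_add_left (j : ℕ) :
    aperyElt ℓ a c α (ℓ + j) = ℓ * (c * a + α) + j * α := by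
  simp only [aperyElt, min_eq_right (Nat.le_add_right ℓ j)]
  push_cast
  ring

lemma aperyElt_nonneg (hc : 0 ≤ c) (hα : 0 ≤ α) (i : ℕ) : 0 ≤ aperyElt ℓ a c α i := by
  unfold aperyElt
  positivity

lemma aperyElt_le (hc : 0 ≤ c) (hα : 0 ≤ α) {i : ℕ} (hi : i < a) :
    aperyElt ℓ a c α i ≤ ℓ * c * a + a * α := by
  have hmin : ((min i ℓ : ℕ) : ℤ) ≤ ℓ := by exact_mod_cast min_le_right i ℓ
  have hia : (i : ℤ) ≤ a := by exact_mod_cast hi.le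
  unfold aperyElt
  gcongr

lemma le_aperyElt (hℓ : 1 ≤ ℓ) (hc : 1 ≤ c) (hα : 0 ≤ α) {i : ℕ} (hi : 1 ≤ i) :
    (a : ℤ) ≤ aperyElt ℓ a c α i := by
  have hmin : (1 : ℤ) ≤ (min i ℓ : ℕ) := by exact_mod_cast le_min hi hℓ
  have : (a : ℤ) ≤ (min i ℓ : ℕ) * c * a :=
    le_mul_of_one_le_left (by positivity) (by nlinarith)
  unfold aperyElt
  nlinarith [Int.natCast_nonneg i]

lemma exists_aperyElt_add_eq (hc : 0 < c) (hα : 0 < α) {i j : ℕ} (hi : i < a) (hj : j < a) :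
    ∃ k < a, ∃ q : ℤ, 0 ≤ q ∧
      aperyElt ℓ a c α i + aperyElt ℓ a c α j = aperyElt ℓ a c α k + q * a ∧
      (q = 0 → k = i + j ∧ min i ℓ + min j ℓ = min k ℓ) := by
  rcases lt_or_ge (i + j) a with h | h
  · have hsub : min (i + j) ℓ ≤ min i ℓ + min j ℓ := by omega
    refine ⟨i + j, h, ((min i ℓ + min j ℓ - min (i + j) ℓ : ℕ) : ℤ) * c, by positivity,
      ?_, fun hq => ⟨rfl, ?_⟩⟩
    · unfold aperyElt
      push_cast [hsub]
      ring
    · have : ((min i ℓ + min j ℓ - min (i + j) ℓ : ℕ) : ℤ) = 0 :=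
        (mul_eq_zero.mp hq).resolve_right hc.ne'
      omega
  · have hsub : min (i + j - a) ℓ ≤ min i ℓ + min j ℓ := by omega
    refine ⟨i + j - a, by omega,
      ((min i ℓ + min j ℓ - min (i + j - a) ℓ : ℕ) : ℤ) * c + α, by positivity, ?_,
      fun hq => ?_⟩
    · unfold aperyElt
      push_cast [hsub, h]
      ring
    · have : (0 : ℤ) ≤ ((min i ℓ + min j ℓ - min (i + j - a) ℓ : ℕ) : ℤ) * c := by
        positivity
      omega

lemma exists_eq_aperyElt_add_mul (hcop : IsCoprime (a : ℤ) α) (ha : 0 < a) (z : ℤ) :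
    ∃ i < a, ∃ m : ℤ, z = aperyElt ℓ a c α i + m * a := by
  have ha' : (0 : ℤ) < a := by exact_mod_cast ha
  obtain ⟨s, t, hst⟩ := hcop
  have hr : (((z * t % a).toNat : ℕ) : ℤ) = z * t % a :=
    Int.toNat_of_nonneg (Int.emod_nonneg _ ha'.ne')
  have hra : z * t % a < a := Int.emod_lt_of_pos _ ha'
  refine ⟨(z * t % a).toNat, by omega,
    z * s + z * t / a * α - (min (z * t % a).toNat ℓ : ℕ) * c, ?_⟩
  unfold aperyElt
  rw [hr, Int.emod_def]
  linear_combination (-z) * hst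

lemma aperyElt_add_mul_inj (hcop : IsCoprime (a : ℤ) α) {i j : ℕ} (hi : i < a) (hj : j < a)
    {m m' : ℤ} (h : aperyElt ℓ a c α i + m * a = aperyElt ℓ a c α j + m' * a) :
    i = j ∧ m = m' := by
  have hdvd : (a : ℤ) ∣ ((i : ℤ) - j) * α := by
    refine ⟨(min j ℓ : ℕ) * c - (min i ℓ : ℕ) * c + m' - m, ?_⟩
    unfold aperyElt at h
    linear_combination h
  have hij : (i : ℤ) - j = 0 :=
    Int.eq_zero_of_abs_lt_dvd (hcop.dvd_of_dvd_mul_right hdvd) (by rw [abs_lt]; omega)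
  obtain rfl : i = j := by omega
  exact ⟨rfl, mul_right_cancel₀ (by omega) (add_left_cancel h)⟩

lemma add_mul_mem_aperySpan_iff (hcop : IsCoprime (a : ℤ) α) {i : ℕ} (hi : i < a) {m : ℤ} :
    aperyElt ℓ a c α i + m * a ∈ aperySpan ℓ a c α ↔ 0 ≤ m := by
  refine ⟨fun ⟨j, hj, m', hm', h⟩ => ?_, fun hm => ⟨i, hi, m, hm, rfl⟩⟩
  exact (aperyElt_add_mul_inj hcop hi hj h).2 ▸ hm'

lemma aperyElt_mem_aperySpan {i : ℕ} (hi : i < a) :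
    aperyElt ℓ a c α i ∈ aperySpan ℓ a c α :=
  ⟨i, hi, 0, le_rfl, by ring⟩

lemma add_mem_aperySpan (hc : 0 < c) (hα : 0 < α) {x y : ℤ} (hx : x ∈ aperySpan ℓ a c α)
    (hy : y ∈ aperySpan ℓ a c α) : x + y ∈ aperySpan ℓ a c α := by
  obtain ⟨i, hi, m, hm, rfl⟩ := hx
  obtain ⟨j, hj, m', hm', rfl⟩ := hy
  obtain ⟨k, hk, q, hq, hsum, -⟩ := exists_aperyElt_add_eq (ℓ := ℓ) hc hα hi hj
  exact ⟨k, hk, q + m + m', by positivity, by linear_combination hsum⟩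

lemma isNumericalSemigroup_aperySpan (hcop : IsCoprime (a : ℤ) α) (ha : 0 < a) (hc : 0 < c)
    (hα : 0 < α) : IsNumericalSemigroup (aperySpan ℓ a c α) := by
  refine ⟨⟨0, ha, 0, le_rfl, by simp⟩, fun x hx y hy => add_mem_aperySpan hc hα hx hy,
    fun x ⟨i, _, m, hm, hx⟩ =>
      hx ▸ add_nonneg (aperyElt_nonneg hc.le hα.le i) (by positivity),
    (Set.finite_Icc 0 (ℓ * c * a + a * α)).subset fun z ⟨hz, hzH⟩ => ⟨hz, ?_⟩⟩
  obtain ⟨i, hi, m, rfl⟩ := exists_eq_aperyElt_add_mul (ℓ := ℓ) (c := c) hcop ha z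
  have hm : m < 0 := not_le.mp fun hm => hzH ⟨i, hi, m, hm, rfl⟩
  have := aperyElt_le (ℓ := ℓ) hc.le hα.le hi
  nlinarith

lemma isLeast_aperySpan (hℓ : 1 ≤ ℓ) (ha : 0 < a) (hc : 1 ≤ c) (hα : 0 ≤ α) :
    IsLeast {x ∈ aperySpan ℓ a c α | x ≠ 0} a := by
  refine ⟨⟨⟨0, ha, 1, zero_le_one, by simp⟩, by positivity⟩, ?_⟩
  rintro x ⟨⟨i, -, m, hm, rfl⟩, hx⟩
  rcases Nat.eq_zero_or_pos i with rfl | hi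
  · have : 1 ≤ m := by
      by_contra! h
      exact hx (by simp [show m = 0 by omega])
    simpa using mul_le_mul_of_nonneg_right this (Nat.cast_nonneg a)
  · have := le_aperyElt (a := a) hℓ hc hα hi
    nlinarith [Int.natCast_nonneg a]

lemma ap_aperySpan (hcop : IsCoprime (a : ℤ) α) :
    Ap (aperySpan ℓ a c α) a = aperyElt ℓ a c α '' Set.Iio a := by
  ext x
  constructor
  · rintro ⟨⟨i, hi, m, hm, rfl⟩, hx⟩
    have : m - 1 < 0 := by
      by_contra! h
      exact hx (by convert (add_mul_mem_aperySpan_iff hcop hi).mpr h using 1; ring)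
    exact ⟨i, hi, by simp [show m = 0 by omega]⟩
  · rintro ⟨i, hi, rfl⟩
    refine ⟨aperyElt_mem_aperySpan hi, fun h => ?_⟩
    have := (add_mul_mem_aperySpan_iff hcop hi (m := -1)).mp (by simpa [sub_eq_add_neg] using h)
    omega

lemma pf_aperySpan (hcop : IsCoprime (a : ℤ) α) (hc : 0 < c) (hα : 0 < α) (hℓ : 1 ≤ ℓ)
    (hℓa : ℓ < a) :
    PF (aperySpan ℓ a c α) = (fun j => aperyElt ℓ a c α j - a) '' Set.Ico ℓ a := by
  have hmem {i : ℕ} (hi : i < a) {m : ℤ} :=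
    add_mul_mem_aperySpan_iff (ℓ := ℓ) (c := c) hcop hi (m := m)
  ext f
  constructor
  · rintro ⟨hf, hadd⟩
    obtain ⟨j, hj, m, rfl⟩ := exists_eq_aperyElt_add_mul (ℓ := ℓ) (c := c) hcop (by omega) f
    have hm : m < 0 := not_le.mp fun h => hf ((hmem hj).mpr h)
    have hm' : 0 ≤ m + 1 := (hmem hj).mp <| by
      simpa [add_mul, add_assoc] using hadd a ⟨0, by omega, 1, zero_le_one, by simp⟩ (by omega)
    obtain rfl : m = -1 := by omega
    refine ⟨j, ⟨?_, hj⟩, by ring⟩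
    by_contra! hjℓ
    have hb0 : aperyElt ℓ a c α 1 ≠ 0 := by
      rw [aperyElt_of_le hℓ]
      positivity
    have hstep : aperyElt ℓ a c α j + -1 * a + aperyElt ℓ a c α 1 =
        aperyElt ℓ a c α (j + 1) + -1 * a := by
      rw [aperyElt_of_le hℓ, aperyElt_of_le hjℓ.le, aperyElt_of_le hjℓ]
      push_cast
      ring
    have := (hmem (by omega)).mp (hstep ▸ hadd _ (aperyElt_mem_aperySpan (by omega)) hb0)
    omega
  · rintro ⟨j, ⟨hℓj, hj⟩, rfl⟩
    refine ⟨fun h => ?_, fun s hs hs0 => ?_⟩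
    · have := (hmem hj (m := -1)).mp (by simpa [sub_eq_add_neg] using h)
      omega
    obtain ⟨k, hk, m, hm, rfl⟩ := hs
    rcases Nat.eq_zero_or_pos k with rfl | hk0
    · have : m ≠ 0 := by rintro rfl; simp at hs0
      exact ⟨j, hj, m - 1, by omega, by simp; ring⟩
    obtain ⟨r, hr, q, hq, hsum, hq0⟩ := exists_aperyElt_add_eq (ℓ := ℓ) hc hα hj hk
    have hq1 : 1 ≤ q := by
      by_contra! h
      have := hq0 (by omega)
      omega
    exact ⟨r, hr, q - 1 + m, by omega, by linear_combination hsum⟩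

lemma minGens_closure_subset (S : Set ℤ) : MinGens (AddSubmonoid.closure S) ⊆ S := by
  have key : ∀ x ∈ AddSubmonoid.closure S, x ∈ S ∨ x = 0 ∨
      ∃ y ∈ AddSubmonoid.closure S, ∃ z ∈ AddSubmonoid.closure S,
        y ≠ 0 ∧ z ≠ 0 ∧ y + z = x := by
    intro x hx
    induction hx using AddSubmonoid.closure_induction with
    | mem x hx => exact Or.inl hx
    | zero => exact Or.inr (Or.inl rfl)
    | add y z hy hz ihy ihz =>
      by_cases hy0 : y = 0
      · simpa [hy0] using ihz
      by_cases hz0 : z = 0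
      · simpa [hz0] using ihy
      exact Or.inr (Or.inr ⟨y, hy, z, hz, hy0, hz0, rfl⟩)
  rintro x ⟨hx, hx0, hind⟩
  rcases key x hx with h | h | h
  exacts [h, (hx0 h).elim, (hind h).elim]

lemma aperyElt_mem_minGens (hcop : IsCoprime (a : ℤ) α) (hℓ : 1 ≤ ℓ) (hc : 0 < c)
    (hα : 0 < α) {i : ℕ} (hi : i < a) (hi' : i = 1 ∨ ℓ < i) :
    aperyElt ℓ a c α i ∈ MinGens (aperySpan ℓ a c α) := by
  refine ⟨aperyElt_mem_aperySpan hi, ?_, ?_⟩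
  · have : 0 < aperyElt ℓ a c α i := by
      unfold aperyElt
      have : (1 : ℤ) ≤ i := by omega
      have := Int.natCast_nonneg a
      positivity
    exact this.ne'
  rintro ⟨_, ⟨j, hj, m, hm, rfl⟩, _, ⟨k, hk, m', hm', rfl⟩, hy0, hz0, hyz⟩
  obtain ⟨r, hr, q, hq, hsum, hq0⟩ := exists_aperyElt_add_eq (ℓ := ℓ) hc hα hj hk
  obtain ⟨rfl, hqmm⟩ := aperyElt_add_mul_inj hcop hr hi
    (m := q + m + m') (m' := 0) (by linear_combination hyz - hsum)
  obtain ⟨rfl, hmin⟩ := hq0 (by omega)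
  obtain rfl : m = 0 := by omega
  obtain rfl : m' = 0 := by omega
  have hj0 : j ≠ 0 := by rintro rfl; simp at hy0
  have hk0 : k ≠ 0 := by rintro rfl; simp at hz0
  omega

lemma generators_subset_minGens (hcop : IsCoprime (a : ℤ) α) (hℓ : 1 ≤ ℓ) (hn : 2 ≤ n)
    (ha : a = ℓ + n - 1) (hc : 1 ≤ c) (hα : 0 < α) (hb : b = c * a + α) :
    generators ℓ n a b α ⊆ MinGens (aperySpan ℓ a c α) := by
  have hmult := isLeast_aperySpan (a := a) hℓ (by omega) hc hα.le
  rintro x ((rfl | rfl) | ⟨i, hi1, hi2, rfl⟩)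
  · refine ⟨hmult.1.1, by omega, ?_⟩
    rintro ⟨y, hy, z, hz, hy0, hz0, hyz⟩
    have := hmult.2 ⟨hy, hy0⟩
    have := hmult.2 ⟨hz, hz0⟩
    omega
  · simpa [aperyElt_of_le hℓ, hb] using
      aperyElt_mem_minGens (c := c) hcop hℓ (by omega) hα (i := 1) (by omega) (Or.inl rfl)
  · simpa [aperyElt_add_left, hb] using
      aperyElt_mem_minGens (c := c) hcop hℓ (by omega) hα (i := ℓ + i) (by omega)
        (Or.inr (by omega))

lemma ncard_generators (hℓ : 1 ≤ ℓ) (hn : 2 ≤ n) (hα : 0 < α) (hab : (a : ℤ) < b) :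
    (generators ℓ n a b α).ncard = n := by
  have himage :
      {x : ℤ | ∃ i : ℕ, 1 ≤ i ∧ i ≤ n - 2 ∧ x = (ℓ : ℤ) * b + (i : ℤ) * α} =
        (fun i : ℕ => (ℓ : ℤ) * b + i * α) '' Set.Icc 1 (n - 2) := by
    ext x
    simp [eq_comm, and_assoc]
  have hinj : Function.Injective fun i : ℕ => (ℓ : ℤ) * b + i * α := fun i j h => by
    simpa [hα.ne'] using h
  have hgt : ∀ x ∈ (fun i : ℕ => (ℓ : ℤ) * b + i * α) '' Set.Icc 1 (n - 2), b < x := by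
    rintro _ ⟨i, ⟨hi, -⟩, rfl⟩
    have : (1 : ℤ) ≤ ℓ := by exact_mod_cast hℓ
    have : (1 : ℤ) ≤ i := by exact_mod_cast hi
    nlinarith [Int.natCast_nonneg a]
  rw [generators, himage, Set.insert_union, Set.singleton_union,
    Set.ncard_insert_of_notMem, Set.ncard_insert_of_notMem (fun h => (hgt b h).false),
    Set.ncard_image_of_injective _ hinj, Set.ncard_Icc_nat]
  · omega
  · rintro (h | h)
    · omega
    · exact absurd (hgt _ h) (by omega)

lemma aperyElt_mem_closure_generators (ha : a = ℓ + n - 1) (hb : b = c * a + α) {i : ℕ}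
    (hi : i < a) : aperyElt ℓ a c α i ∈ AddSubmonoid.closure (generators ℓ n a b α) := by
  rcases le_or_gt i ℓ with hiℓ | hiℓ
  · have hbmem : b ∈ AddSubmonoid.closure (generators ℓ n a b α) :=
      AddSubmonoid.subset_closure (Or.inl (by simp))
    simpa [aperyElt_of_le hiℓ, ← hb] using AddSubmonoid.nsmul_mem _ hbmem i
  · apply AddSubmonoid.subset_closure
    refine Or.inr ⟨i - ℓ, by omega, by omega, ?_⟩
    obtain ⟨j, rfl⟩ := Nat.exists_eq_add_of_lt hiℓ
    rw [show ℓ + j + 1 = ℓ + (j + 1) by ring, aperyElt_add_left, hb]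
    simp

lemma coe_closure_generators (hℓ : 1 ≤ ℓ) (hn : 2 ≤ n) (ha : a = ℓ + n - 1) (hc : 0 < c)
    (hα : 0 < α) (hb : b = c * a + α) :
    (AddSubmonoid.closure (generators ℓ n a b α) : Set ℤ) = aperySpan ℓ a c α := by
  apply subset_antisymm
  · intro x hx
    induction hx using AddSubmonoid.closure_induction with
    | mem x hx =>
      rcases hx with (rfl | rfl) | ⟨i, hi1, hi2, rfl⟩
      · exact ⟨0, by omega, 1, zero_le_one, by simp⟩
      · simpa [aperyElt_of_le hℓ, ← hb] using
          aperyElt_mem_aperySpan (ℓ := ℓ) (c := c) (α := α) (show 1 < a by omega)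
      · simpa [aperyElt_add_left, ← hb] using
          aperyElt_mem_aperySpan (ℓ := ℓ) (c := c) (α := α) (show ℓ + i < a by omega)
    | zero => exact ⟨0, by omega, 0, le_rfl, by simp⟩
    | add x y _ _ hx hy => exact add_mem_aperySpan hc hα hx hy
  · rintro x ⟨i, hi, m, hm, rfl⟩
    lift m to ℕ using hm
    have hamem : (a : ℤ) ∈ AddSubmonoid.closure (generators ℓ n a b α) :=
      AddSubmonoid.subset_closure (Or.inl (by simp))
    refine add_mem (aperyElt_mem_closure_generators ha hb hi) ?_
    simpa using AddSubmonoid.nsmul_mem _ hamem m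

lemma image_aperyElt_Iio (hn : 2 ≤ n) (ha : a = ℓ + n - 1) (hb : b = c * a + α) :
    aperyElt ℓ a c α '' Set.Iio a = {x : ℤ | ∃ i : ℕ, i ≤ ℓ ∧ x = (i : ℤ) * b} ∪
      {x : ℤ | ∃ i : ℕ, 1 ≤ i ∧ i ≤ n - 2 ∧ x = (ℓ : ℤ) * b + (i : ℤ) * α} := by
  ext x
  constructor
  · rintro ⟨i, hi, rfl⟩
    rcases le_or_gt i ℓ with hiℓ | hiℓ
    · exact Or.inl ⟨i, hiℓ, by rw [aperyElt_of_le hiℓ, hb]⟩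
    · obtain ⟨j, rfl⟩ := Nat.exists_eq_add_of_lt hiℓ
      refine Or.inr ⟨j + 1, by omega, by simp only [Set.mem_Iio] at hi; omega, ?_⟩
      rw [show ℓ + j + 1 = ℓ + (j + 1) by ring, aperyElt_add_left, hb]
  · rintro (⟨i, hi, rfl⟩ | ⟨i, hi1, hi2, rfl⟩)
    · exact ⟨i, show i < a by omega, by rw [aperyElt_of_le hi, hb]⟩
    · exact ⟨ℓ + i, show ℓ + i < a by omega, by rw [aperyElt_add_left, hb]⟩

lemma image_aperyElt_sub_Ico (ha : a = ℓ + n - 1) (hb : b = c * a + α) :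
    (fun j => aperyElt ℓ a c α j - a) '' Set.Ico ℓ a =
      {x : ℤ | ∃ i : ℕ, 1 ≤ i ∧ i ≤ n - 1 ∧
        x = ((c - 1) * a + (ℓ - 1 : ℤ) * b) + (i : ℤ) * α} := by
  have key : ∀ i : ℕ, 1 ≤ i → aperyElt ℓ a c α (ℓ + i - 1) - a =
      ((c - 1) * a + (ℓ - 1 : ℤ) * b) + (i : ℤ) * α := by
    intro i hi
    obtain ⟨j, rfl⟩ := Nat.exists_eq_add_of_le hi
    rw [show ℓ + (1 + j) - 1 = ℓ + j by omega, aperyElt_add_left, hb]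
    push_cast
    ring
  ext x
  constructor
  · rintro ⟨j, ⟨hℓj, hj⟩, rfl⟩
    refine ⟨j - ℓ + 1, by omega, by omega, ?_⟩
    rw [← key _ le_add_self, show ℓ + (j - ℓ + 1) - 1 = j by omega]
  · rintro ⟨i, hi1, hi2, rfl⟩
    exact ⟨ℓ + i - 1, ⟨by omega, by omega⟩, key i hi1⟩

end ArithPF

open ArithPF

theorem stmt12 (ℓ n : ℕ) (hℓ : 2 ≤ ℓ) (hn : 3 ≤ n) (α h₁ : ℤ) (hα : 0 < α) (hh₁ : 0 ≤ h₁)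
    (a : ℕ) (ha : a = ℓ + n - 1) (b : ℤ) (hb : b = (h₁ + 1) * a + α)
    (hgcd : Int.gcd (a : ℤ) α = 1)
    (H : Set ℤ)
    (hH : H = (AddSubmonoid.closure ({(a : ℤ), b} ∪
        {x : ℤ | ∃ i : ℕ, 1 ≤ i ∧ i ≤ n - 2 ∧ x = (ℓ : ℤ) * b + (i : ℤ) * α}) : AddSubmonoid ℤ)) :
    IsNumericalSemigroup H ∧
    IsLeast {x ∈ H | x ≠ 0} (a : ℤ) ∧
    (MinGens H).ncard = n ∧
    Ap H a = {x : ℤ | ∃ i : ℕ, i ≤ ℓ ∧ x = (i : ℤ) * b} ∪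
        {x : ℤ | ∃ i : ℕ, 1 ≤ i ∧ i ≤ n - 2 ∧ x = (ℓ : ℤ) * b + (i : ℤ) * α} ∧
    PF H = {x : ℤ | ∃ i : ℕ, 1 ≤ i ∧ i ≤ n - 1 ∧ x = (h₁ * a + (ℓ - 1 : ℤ) * b) + (i : ℤ) * α} := by
  have hcop : IsCoprime (a : ℤ) α := Int.isCoprime_iff_gcd_eq_one.mpr hgcd
  have hc : (1 : ℤ) ≤ h₁ + 1 := by omega
  have hspan : H = aperySpan ℓ a (h₁ + 1) α :=
    hH.trans (coe_closure_generators (by omega) (by omega) ha (by omega) hα hb)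
  have hminGens : MinGens H = generators ℓ n a b α :=
    subset_antisymm (hH ▸ minGens_closure_subset _)
      (hspan ▸ generators_subset_minGens hcop (by omega) (by omega) ha hc hα hb)
  refine ⟨hspan ▸ isNumericalSemigroup_aperySpan hcop (by omega) (by omega) hα,
    hspan ▸ isLeast_aperySpan (by omega) (by omega) hc hα.le, ?_, ?_, ?_⟩
  · rw [hminGens, ncard_generators (by omega) (by omega) hα (by rw [hb]; nlinarith)]
  · rw [hspan, ap_aperySpan hcop, image_aperyElt_Iio (by omega) ha hb]
  · rw [hspan, pf_aperySpan hcop (by omega) hα (by omega) (by omega),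
      image_aperyElt_sub_Ico ha hb, add_sub_cancel_right]
end

section
/- Let H = ⟨8, 9, 31, 37, 38⟩. Then Ap(H, 8) = {0, 9, 18, 27, 31, 36, 37, 38} and PF(H) = {23, 28, 29, 30}; in particular PF(H) has 4 elements but is not an arithmetic progression. -/
/-!
Let `w = aperyFun : ZMod 8 → ℤ` send a residue to the least element of `H` in it. Since `w` is
subadditive with `w 0 = 0`, the set `{x | w x ≤ x}` is a submonoid containing the
generators, and each `w r` lies in `H`; hence `x ∈ H ↔ w x ≤ x`. Then `Ap(H, 8)` is the
range of `w`, and `f ∈ PF(H)` exactly when `f + 8 = w r` is maximal in `Ap(H, 8)` for the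
order of `H`, i.e. `w (r + r') + 8 ≤ w r + w r'` whenever `w r' ≠ 0`: a finite check on `ZMod 8`.
-/

theorem mem_PF_iff_mem_Ap {H : Set ℤ} (hadd : ∀ x ∈ H, ∀ y ∈ H, x + y ∈ H) {m : ℤ}
    (hm : m ∈ H) (hm0 : m ≠ 0) {f : ℤ} :
    f ∈ PF H ↔ f + m ∈ Ap H m ∧ ∀ a ∈ Ap H m, a ≠ 0 → f + a ∈ H := by
  simp only [PF, Ap, Set.mem_ofPred_eq, add_sub_cancel_right]
  constructor
  · rintro ⟨hf, hfs⟩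
    exact ⟨⟨hfs m hm hm0, hf⟩, fun a ha ha0 => hfs a ha.1 ha0⟩
  · rintro ⟨⟨hfm, hf⟩, hfa⟩
    refine ⟨hf, fun s hs hs0 => ?_⟩
    by_cases hsm : s - m ∈ H
    · simpa using hadd _ hfm _ hsm
    · exact hfa s ⟨hs, hsm⟩ hs0

section AperyFunction

variable {m : ℕ} {w : ZMod m → ℤ}

theorem dvd_sub_apery (hw : ∀ r, ((w r : ℤ) : ZMod m) = r) (x : ℤ) : (m : ℤ) ∣ x - w x :=
  (ZMod.intCast_zmod_eq_zero_iff_dvd _ _).1 (by push_cast [hw]; ring)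

theorem closure_le_of_apery {s : Set ℤ} (hw0 : w 0 ≤ 0)
    (hw_add : ∀ r r', w (r + r') ≤ w r + w r') (hs : ∀ x ∈ s, w x ≤ x) {x : ℤ}
    (hx : x ∈ AddSubmonoid.closure s) : w x ≤ x := by
  induction hx using AddSubmonoid.closure_induction with
  | mem x hx => exact hs x hx
  | zero => simpa using hw0
  | add x y _ _ hx hy => push_cast; linarith [hw_add x y]

theorem mem_of_apery_le {M : AddSubmonoid ℤ} (hw : ∀ r, ((w r : ℤ) : ZMod m) = r)
    (hm : (m : ℤ) ∈ M) (hw_mem : ∀ r, w r ∈ M) {x : ℤ} (hx : w x ≤ x) : x ∈ M := by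
  obtain ⟨n, hn⟩ : ∃ n : ℕ, x - w x = n := ⟨(x - w x).toNat, by omega⟩
  obtain ⟨k, rfl⟩ : m ∣ n := Int.natCast_dvd_natCast.1 (hn ▸ dvd_sub_apery hw x)
  have hx : x = w x + k • (m : ℤ) := by push_cast at hn; rw [nsmul_eq_mul]; linarith
  exact hx ▸ M.add_mem (hw_mem _) (M.nsmul_mem hm k)

theorem mem_closure_iff_apery_le {s : Set ℤ} (hw : ∀ r, ((w r : ℤ) : ZMod m) = r)
    (hw0 : w 0 ≤ 0) (hw_add : ∀ r r', w (r + r') ≤ w r + w r') (hs : ∀ x ∈ s, w x ≤ x)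
    (hm : (m : ℤ) ∈ AddSubmonoid.closure s) (hw_mem : ∀ r, w r ∈ AddSubmonoid.closure s)
    (x : ℤ) : x ∈ AddSubmonoid.closure s ↔ w x ≤ x :=
  ⟨closure_le_of_apery hw0 hw_add hs, mem_of_apery_le hw hm hw_mem⟩

variable [NeZero m] {H : Set ℤ}

theorem Ap_eq_range (hH : ∀ x : ℤ, x ∈ H ↔ w x ≤ x) (hw : ∀ r, ((w r : ℤ) : ZMod m) = r) :
    Ap H m = Set.range w := by
  ext x
  simp only [Ap, Set.mem_ofPred_eq, hH, Set.mem_range]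
  constructor
  · rintro ⟨hx, hxm⟩
    refine ⟨x, ?_⟩
    have : (((x - m : ℤ)) : ZMod m) = x := by push_cast; simp
    rw [this] at hxm
    linarith [Int.eq_zero_of_dvd_of_nonneg_of_lt (sub_nonneg.2 hx) (by linarith)
      (dvd_sub_apery hw x)]
  · rintro ⟨r, rfl⟩
    have : (((w r - m : ℤ)) : ZMod m) = r := by push_cast; simp [hw]
    simp only [hw, this]
    have : (0 : ℤ) < m := by exact_mod_cast Nat.pos_of_neZero m
    constructor <;> linarith

theorem PF_eq_image (hadd : ∀ x ∈ H, ∀ y ∈ H, x + y ∈ H) (hm : (m : ℤ) ∈ H)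
    (hH : ∀ x : ℤ, x ∈ H ↔ w x ≤ x) (hw : ∀ r, ((w r : ℤ) : ZMod m) = r) :
    PF H = (fun r => w r - m) '' {r | ∀ r', w r' ≠ 0 → w (r + r') + m ≤ w r + w r'} := by
  have hcast (r r' : ZMod m) : (((w r - m + w r' : ℤ)) : ZMod m) = r + r' := by
    push_cast; simp [hw]
  ext f
  rw [mem_PF_iff_mem_Ap hadd hm (by exact_mod_cast NeZero.ne m), Ap_eq_range hH hw]
  simp only [Set.mem_range, Set.mem_image, Set.mem_ofPred_eq, ne_eq, forall_exists_index,
    forall_apply_eq_imp_iff]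
  constructor
  · rintro ⟨⟨r, hr⟩, hf⟩
    obtain rfl : f = w r - m := by linarith
    refine ⟨r, fun r' hr' => ?_, rfl⟩
    have := (hH _).1 (hf r' hr')
    rw [hcast] at this
    linarith
  · rintro ⟨r, hr, rfl⟩
    refine ⟨⟨r, by ring⟩, fun r' hr' => (hH _).2 ?_⟩
    rw [hcast]
    linarith [hr r' hr']

end AperyFunction

local notation "H₀" => AddSubmonoid.closure ({8, 9, 31, 37, 38} : Set ℤ)

def aperyFun : ZMod 8 → ℤ := ![0, 9, 18, 27, 36, 37, 38, 31]

theorem intCast_aperyFun : ∀ r, ((aperyFun r : ℤ) : ZMod 8) = r := by decide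

theorem mem_closure_iff_aperyFun_le (x : ℤ) : x ∈ H₀ ↔ aperyFun x ≤ x := by
  have mem : ∀ {x : ℤ}, x ∈ ({8, 9, 31, 37, 38} : Set ℤ) → x ∈ H₀ :=
    fun hx => AddSubmonoid.subset_closure hx
  have h9 := mem (x := 9) (by simp)
  refine mem_closure_iff_apery_le (m := 8) intCast_aperyFun (by decide) (by decide) ?_
    (mem (by simp)) ?_ x
  · simp only [Set.mem_insert_iff, Set.mem_singleton_iff]
    rintro x (rfl | rfl | rfl | rfl | rfl) <;> decide
  · intro r
    fin_cases r
    · exact zero_mem _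
    · exact h9
    · exact add_mem h9 h9
    · exact add_mem (add_mem h9 h9) h9
    · exact add_mem (add_mem (add_mem h9 h9) h9) h9
    all_goals exact mem (by simp [aperyFun])

theorem Ap_closure_eq : Ap H₀ 8 = {0, 9, 18, 27, 31, 36, 37, 38} := by
  have hrange := Ap_eq_range (m := 8) mem_closure_iff_aperyFun_le intCast_aperyFun
  rw [Nat.cast_ofNat] at hrange
  rw [hrange, ← Set.image_univ, ← Finset.coe_univ, ← Finset.coe_image,
    (by decide : Finset.univ.image aperyFun = {0, 9, 18, 27, 31, 36, 37, 38})]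
  push_cast
  rfl

theorem PF_closure_eq : PF H₀ = {23, 28, 29, 30} := by
  have hmax : {r : ZMod 8 | ∀ r', aperyFun r' ≠ 0 →
      aperyFun (r + r') + 8 ≤ aperyFun r + aperyFun r'} = {4, 5, 6, 7} := by
    ext r; revert r; decide
  have himage := PF_eq_image (m := 8) (fun x hx y hy => add_mem hx hy)
    ((mem_closure_iff_aperyFun_le 8).2 (by decide)) mem_closure_iff_aperyFun_le intCast_aperyFun
  rw [Nat.cast_ofNat, hmax] at himage
  rw [himage]
  ext x
  simp [aperyFun]
  tauto

theorem not_arithProg_23_28_29_30 :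
    ¬ ∃ s d : ℤ, 0 < d ∧
      ({23, 28, 29, 30} : Set ℤ) = {x : ℤ | ∃ i : ℕ, 1 ≤ i ∧ i ≤ 4 ∧ x = s + (i : ℤ) * d} := by
  rintro ⟨s, d, hd, hset⟩
  have first : s + d ∈ ({23, 28, 29, 30} : Set ℤ) := hset ▸ ⟨1, le_rfl, by norm_num, by ring⟩
  have last : s + 4 * d ∈ ({23, 28, 29, 30} : Set ℤ) := hset ▸ ⟨4, by norm_num, le_rfl, by simp⟩
  obtain ⟨i, hi1, hi4, hi⟩ : (23 : ℤ) ∈ {x : ℤ | ∃ i : ℕ, 1 ≤ i ∧ i ≤ 4 ∧ x = s + i * d} :=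
    hset ▸ by simp
  obtain ⟨j, hj1, hj4, hj⟩ : (30 : ℤ) ∈ {x : ℤ | ∃ i : ℕ, 1 ≤ i ∧ i ≤ 4 ∧ x = s + i * d} :=
    hset ▸ by simp
  simp only [Set.mem_insert_iff, Set.mem_singleton_iff] at first last
  interval_cases i <;> interval_cases j <;> omega

theorem stmt16 (H : Set ℤ)
    (hH : H = (AddSubmonoid.closure ({8, 9, 31, 37, 38} : Set ℤ) : AddSubmonoid ℤ)) :
    Ap H 8 = {0, 9, 18, 27, 31, 36, 37, 38} ∧ PF H = {23, 28, 29, 30} ∧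
    (PF H).ncard = 4 ∧
    ¬ ∃ s d : ℤ, 0 < d ∧ PF H = {x : ℤ | ∃ i : ℕ, 1 ≤ i ∧ i ≤ 4 ∧ x = s + (i : ℤ) * d} := by
  subst hH
  refine ⟨Ap_closure_eq, PF_closure_eq, ?_, PF_closure_eq ▸ not_arithProg_23_28_29_30⟩
  rw [PF_closure_eq]
  norm_num [Set.ncard_insert_of_notMem]
end
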